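/- arXiv:2209.03018 — 2 statements merged into one kernel-verified Lean document; each statement's English description precedes it below -/
import Mathlib

section
/- The three Hamiltonians h₁ = 2p₁p₃+p₂²+2q₁p₂p₃+q₂p₃² + q₁⁵−4q₁³q₂+3q₁²q₃+3q₁q₂²−2q₂q₃ + cq₁, h₂ = 2q₁p₁p₃+2q₁p₂²+2p₁p₂+(q₁q₂−q₃)p₃²+2q₁²p₂p₃ + q₁⁴q₂−q₁³q₃−3q₁²q₂²+4q₁q₂q₃+q₂³−q₃² + cq₂, and h₃ = p₁²+2q₁p₁p₂+2q₂p₁p₃+q₁²p₂²+(q₂²−q₁q₃)p₃²+2(q₁q₂−q₃)p₂p₃ + q₁⁴q₃−3q₁²q₂q₃+2q₁q₃²+q₂²q₃ + cq₃ pairwise Poisson commute with respect to the canonical Poisson bracket in (q₁,q₂,q₃,p₁,p₂,p₃). -/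
noncomputable def dQ1 (F : ℝ → ℝ → ℝ → ℝ → ℝ → ℝ → ℝ) (a b e u v w : ℝ) : ℝ :=
  deriv (fun x => F x b e u v w) a
noncomputable def dQ2 (F : ℝ → ℝ → ℝ → ℝ → ℝ → ℝ → ℝ) (a b e u v w : ℝ) : ℝ :=
  deriv (fun x => F a x e u v w) b
noncomputable def dQ3 (F : ℝ → ℝ → ℝ → ℝ → ℝ → ℝ → ℝ) (a b e u v w : ℝ) : ℝ :=
  deriv (fun x => F a b x u v w) e
noncomputable def dP1 (F : ℝ → ℝ → ℝ → ℝ → ℝ → ℝ → ℝ) (a b e u v w : ℝ) : ℝ :=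
  deriv (fun x => F a b e x v w) u
noncomputable def dP2 (F : ℝ → ℝ → ℝ → ℝ → ℝ → ℝ → ℝ) (a b e u v w : ℝ) : ℝ :=
  deriv (fun x => F a b e u x w) v
noncomputable def dP3 (F : ℝ → ℝ → ℝ → ℝ → ℝ → ℝ → ℝ) (a b e u v w : ℝ) : ℝ :=
  deriv (fun x => F a b e u v x) w

/-- Canonical Poisson bracket in (q₁,q₂,q₃,p₁,p₂,p₃). -/
noncomputable def pbracket (F G : ℝ → ℝ → ℝ → ℝ → ℝ → ℝ → ℝ) (a b e u v w : ℝ) : ℝ :=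
    dQ1 F a b e u v w * dP1 G a b e u v w - dP1 F a b e u v w * dQ1 G a b e u v w
  + dQ2 F a b e u v w * dP2 G a b e u v w - dP2 F a b e u v w * dQ2 G a b e u v w
  + dQ3 F a b e u v w * dP3 G a b e u v w - dP3 F a b e u v w * dQ3 G a b e u v w

/-!
A polynomial function has as partial derivatives the evaluations of the formal partial derivatives
`MvPolynomial.pderiv` (by induction on the polynomial). Hence the Poisson bracket of two polynomial
functions is the evaluation of the formal bracket in `MvPolynomial (Fin 6)`, and the three formal
brackets of the Hamiltonians vanish identically, over any commutative ring and for every `c`.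
-/

open MvPolynomial

theorem MvPolynomial.hasDerivAt_eval_update {𝕜 σ : Type*} [NontriviallyNormedField 𝕜]
    [DecidableEq σ] (P : MvPolynomial σ 𝕜) (x : σ → 𝕜) (i : σ) (t : 𝕜) :
    HasDerivAt (fun s => eval (Function.update x i s) P)
      (eval (Function.update x i t) (pderiv i P)) t := by
  induction P using MvPolynomial.induction_on with
  | C a => simpa using hasDerivAt_const t a
  | add P Q hP hQ => simpa using hP.fun_add hQ
  | mul_X P n hP =>
    have hX : HasDerivAt (fun s => Function.update x i s n)
        (eval (Function.update x i t) (pderiv i (X n))) t := by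
      obtain rfl | h := eq_or_ne n i
      · simpa using hasDerivAt_id' t
      · simpa [h, pderiv_X_of_ne h] using hasDerivAt_const t (x n)
    simp only [map_mul, eval_X]
    refine (hP.fun_mul hX).congr_deriv ?_
    simp only [Derivation.leibniz, map_add, map_mul, eval_X, smul_eq_mul]
    ring

theorem MvPolynomial.deriv_eval_of_eq_update {𝕜 σ : Type*} [NontriviallyNormedField 𝕜]
    [DecidableEq σ] (P : MvPolynomial σ 𝕜) (x : σ → 𝕜) (i : σ) {y : 𝕜 → σ → 𝕜}
    (hy : ∀ s, y s = Function.update x i s) :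
    deriv (fun s => eval (y s) P) (x i) = eval x (pderiv i P) := by
  simpa [hy] using (hasDerivAt_eval_update P x i (x i)).deriv

theorem MvPolynomial.pderiv_ofNat {R σ : Type*} [CommSemiring R] (i : σ) (n : ℕ) [n.AtLeastTwo] :
    pderiv i (no_index (OfNat.ofNat n) : MvPolynomial σ R) = 0 := by
  rw [← Nat.cast_ofNat]
  exact Derivation.map_natCast _ n

noncomputable def poissonBracket {R : Type*} [CommRing R] (P Q : MvPolynomial (Fin 6) R) :
    MvPolynomial (Fin 6) R :=
    pderiv 0 P * pderiv 3 Q - pderiv 3 P * pderiv 0 Q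
  + pderiv 1 P * pderiv 4 Q - pderiv 4 P * pderiv 1 Q
  + pderiv 2 P * pderiv 5 Q - pderiv 5 P * pderiv 2 Q

noncomputable def polyFun (P : MvPolynomial (Fin 6) ℝ) : ℝ → ℝ → ℝ → ℝ → ℝ → ℝ → ℝ :=
  fun a b e u v w => eval ![a, b, e, u, v, w] P

section polyFun

variable (P : MvPolynomial (Fin 6) ℝ) (a b e u v w : ℝ)

theorem dQ1_polyFun : dQ1 (polyFun P) a b e u v w = polyFun (pderiv 0 P) a b e u v w :=
  deriv_eval_of_eq_update P ![a, b, e, u, v, w] 0 fun s => by ext j; fin_cases j <;> rfl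

theorem dQ2_polyFun : dQ2 (polyFun P) a b e u v w = polyFun (pderiv 1 P) a b e u v w :=
  deriv_eval_of_eq_update P ![a, b, e, u, v, w] 1 fun s => by ext j; fin_cases j <;> rfl

theorem dQ3_polyFun : dQ3 (polyFun P) a b e u v w = polyFun (pderiv 2 P) a b e u v w :=
  deriv_eval_of_eq_update P ![a, b, e, u, v, w] 2 fun s => by ext j; fin_cases j <;> rfl

theorem dP1_polyFun : dP1 (polyFun P) a b e u v w = polyFun (pderiv 3 P) a b e u v w :=
  deriv_eval_of_eq_update P ![a, b, e, u, v, w] 3 fun s => by ext j; fin_cases j <;> rfl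

theorem dP2_polyFun : dP2 (polyFun P) a b e u v w = polyFun (pderiv 4 P) a b e u v w :=
  deriv_eval_of_eq_update P ![a, b, e, u, v, w] 4 fun s => by ext j; fin_cases j <;> rfl

theorem dP3_polyFun : dP3 (polyFun P) a b e u v w = polyFun (pderiv 5 P) a b e u v w :=
  deriv_eval_of_eq_update P ![a, b, e, u, v, w] 5 fun s => by ext j; fin_cases j <;> rfl

theorem pbracket_polyFun (Q : MvPolynomial (Fin 6) ℝ) :
    pbracket (polyFun P) (polyFun Q) a b e u v w = polyFun (poissonBracket P Q) a b e u v w := by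
  simp only [pbracket, dQ1_polyFun, dQ2_polyFun, dQ3_polyFun, dP1_polyFun, dP2_polyFun,
    dP3_polyFun, poissonBracket, polyFun, map_add, map_sub, map_mul]

end polyFun

section Hamiltonians

variable {R : Type*} [CommRing R]

local notation "q₁" => X 0
local notation "q₂" => X 1
local notation "q₃" => X 2
local notation "p₁" => X 3
local notation "p₂" => X 4
local notation "p₃" => X 5

noncomputable def H₁ (c : R) : MvPolynomial (Fin 6) R :=
  2*p₁*p₃ + p₂^2 + 2*q₁*p₂*p₃ + q₂*p₃^2
    + q₁^5 - 4*q₁^3*q₂ + 3*q₁^2*q₃ + 3*q₁*q₂^2 - 2*q₂*q₃ + C c*q₁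

noncomputable def H₂ (c : R) : MvPolynomial (Fin 6) R :=
  2*q₁*p₁*p₃ + 2*q₁*p₂^2 + 2*p₁*p₂ + (q₁*q₂ - q₃)*p₃^2 + 2*q₁^2*p₂*p₃
    + q₁^4*q₂ - q₁^3*q₃ - 3*q₁^2*q₂^2 + 4*q₁*q₂*q₃ + q₂^3 - q₃^2 + C c*q₂

noncomputable def H₃ (c : R) : MvPolynomial (Fin 6) R :=
  p₁^2 + 2*q₁*p₁*p₂ + 2*q₂*p₁*p₃ + q₁^2*p₂^2 + (q₂^2 - q₁*q₃)*p₃^2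
    + 2*(q₁*q₂ - q₃)*p₂*p₃
    + q₁^4*q₃ - 3*q₁^2*q₂*q₃ + 2*q₁*q₃^2 + q₂^2*q₃ + C c*q₃

theorem poissonBracket_H_eq_zero (c : R) :
    poissonBracket (H₁ c) (H₂ c) = 0 ∧ poissonBracket (H₁ c) (H₃ c) = 0 ∧
      poissonBracket (H₂ c) (H₃ c) = 0 := by
  refine ⟨?_, ?_, ?_⟩ <;>
    simp only [poissonBracket, H₁, H₂, H₃, Derivation.map_add, Derivation.map_sub,
      Derivation.leibniz, Derivation.leibniz_pow, pderiv_X_self, pderiv_X_of_ne, pderiv_C,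
      pderiv_ofNat, ne_eq, Fin.reduceEq, not_false_eq_true, smul_eq_mul, nsmul_eq_mul] <;>
    ring

end Hamiltonians

theorem stmt5 (c : ℝ) (h1 h2 h3 : ℝ → ℝ → ℝ → ℝ → ℝ → ℝ → ℝ)
    (hh1 : h1 = fun q1 q2 q3 p1 p2 p3 =>
      2*p1*p3 + p2^2 + 2*q1*p2*p3 + q2*p3^2
      + q1^5 - 4*q1^3*q2 + 3*q1^2*q3 + 3*q1*q2^2 - 2*q2*q3 + c*q1)
    (hh2 : h2 = fun q1 q2 q3 p1 p2 p3 =>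
      2*q1*p1*p3 + 2*q1*p2^2 + 2*p1*p2 + (q1*q2 - q3)*p3^2 + 2*q1^2*p2*p3
      + q1^4*q2 - q1^3*q3 - 3*q1^2*q2^2 + 4*q1*q2*q3 + q2^3 - q3^2 + c*q2)
    (hh3 : h3 = fun q1 q2 q3 p1 p2 p3 =>
      p1^2 + 2*q1*p1*p2 + 2*q2*p1*p3 + q1^2*p2^2 + (q2^2 - q1*q3)*p3^2
      + 2*(q1*q2 - q3)*p2*p3
      + q1^4*q3 - 3*q1^2*q2*q3 + 2*q1*q3^2 + q2^2*q3 + c*q3) :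
    ∀ q1 q2 q3 p1 p2 p3 : ℝ,
      pbracket h1 h2 q1 q2 q3 p1 p2 p3 = 0 ∧
      pbracket h1 h3 q1 q2 q3 p1 p2 p3 = 0 ∧
      pbracket h2 h3 q1 q2 q3 p1 p2 p3 = 0 := by
  have hH₁ : h1 = polyFun (H₁ c) := by subst hh1; funext; simp [polyFun, H₁]
  have hH₂ : h2 = polyFun (H₂ c) := by subst hh2; funext; simp [polyFun, H₂]
  have hH₃ : h3 = polyFun (H₃ c) := by subst hh3; funext; simp [polyFun, H₃]
  obtain ⟨h₁₂, h₁₃, h₂₃⟩ := poissonBracket_H_eq_zero c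
  intro q1 q2 q3 p1 p2 p3
  simp only [hH₁, hH₂, hH₃, pbracket_polyFun, h₁₂, h₁₃, h₂₃, polyFun, map_zero, and_self]
end

section
/- The three Hamiltonians h₁ = 2p₁p₂+q₁p₂²−q₃p₃² −q₁⁴+3q₁²q₂−2q₁q₃−q₂² + c/q₃, h₂ = p₁²+2q₁p₁p₂−2q₃p₂p₃+(q₁²−q₂)p₂²−q₁q₃p₃² −q₁³q₂+q₁²q₃+2q₁q₂²−2q₂q₃ + cq₁/q₃, and h₃ = −2q₃p₁p₃−q₃p₂²−2q₁q₃p₂p₃−q₂q₃p₃² −q₁³q₃+2q₁q₂q₃−q₃² + cq₂/q₃ pairwise Poisson commute on the region q₃ ≠ 0. -/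
lemma deriv_cmul (a x : ℝ) : deriv (HMul.hMul a) x = a := by
  simpa using (((hasDerivAt_id x).const_mul a).deriv)

lemma deriv_cdiv (a x : ℝ) (hx : x ≠ 0) : deriv (HDiv.hDiv a) x = -a/x^2 := by
  have : HasDerivAt (fun y : ℝ => a / y) (-a/x^2) x := by
    simpa [div_eq_mul_inv, neg_div, mul_comm] using ((hasDerivAt_id x).inv hx).const_mul a
  exact this.deriv

lemma deriv_csub (a x : ℝ) : deriv (HSub.hSub a) x = -1 := by
  simpa using ((hasDerivAt_id x).const_sub a).deriv

set_option maxHeartbeats 4000000 in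
theorem stmt6 (c : ℝ) (h1 h2 h3 : ℝ → ℝ → ℝ → ℝ → ℝ → ℝ → ℝ)
    (hh1 : h1 = fun q1 q2 q3 p1 p2 p3 =>
      2*p1*p2 + q1*p2^2 - q3*p3^2
      - q1^4 + 3*q1^2*q2 - 2*q1*q3 - q2^2 + c/q3)
    (hh2 : h2 = fun q1 q2 q3 p1 p2 p3 =>
      p1^2 + 2*q1*p1*p2 - 2*q3*p2*p3 + (q1^2 - q2)*p2^2 - q1*q3*p3^2
      - q1^3*q2 + q1^2*q3 + 2*q1*q2^2 - 2*q2*q3 + c*q1/q3)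
    (hh3 : h3 = fun q1 q2 q3 p1 p2 p3 =>
      -2*q3*p1*p3 - q3*p2^2 - 2*q1*q3*p2*p3 - q2*q3*p3^2
      - q1^3*q3 + 2*q1*q2*q3 - q3^2 + c*q2/q3) :
    ∀ q1 q2 q3 p1 p2 p3 : ℝ, q3 ≠ 0 →
      pbracket h1 h2 q1 q2 q3 p1 p2 p3 = 0 ∧
      pbracket h1 h3 q1 q2 q3 p1 p2 p3 = 0 ∧
      pbracket h2 h3 q1 q2 q3 p1 p2 p3 = 0 := by
  subst hh1 hh2 hh3
  intro q1 q2 q3 p1 p2 p3 hq3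
  unfold pbracket dQ1 dQ2 dQ3 dP1 dP2 dP3
  simp only []
  refine ⟨?_, ?_, ?_⟩ <;>
  · simp (disch := first | assumption | fun_prop (disch := assumption))
      [deriv_add, deriv_sub, deriv_mul, deriv_pow, deriv_div, deriv_cmul, deriv_cdiv, deriv_csub]
    field_simp
    ring
end
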